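/- arXiv:2601.10058 — 4 statements merged into one kernel-verified Lean document; each statement's English description precedes it below -/
import Mathlib

section
/- Define the population log-likelihood L(ν_1,…,ν_C) = E_x[ log( (1/C) Σ_{i=1}^C exp(−½‖x−ν_i‖²_{Σ⁻¹}) ) ], where the expectation is over x drawn from the equal-weight Gaussian mixture with true means μ_1,…,μ_C and covariance Σ = σ²I_d. Then for each i ∈ [C], the d×d Hessian block ∇²_{ν_i} L, evaluated at the true means (ν_1,…,ν_C) = (μ_1,…,μ_C), is negative definite: for every nonzero u ∈ ℝ^d, uᵀ (∇²_{ν_i} L)(μ_1,…,μ_C) u < 0. -/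
/-!
Statement 4: the Hessian block ∇²_{ν_i} L of the population log-likelihood,
evaluated at the true means, is negative definite (Lemma 2 of the paper).
The quadratic form uᵀ(∇²_{ν_i}L)u is rendered as the second derivative at 0 of
s ↦ L(μ with its i-th mean replaced by μ_i + s·u).
-/

open MeasureTheory Real Finset
open scoped ENNReal

noncomputable section

abbrev E (d : ℕ) := EuclideanSpace ℝ (Fin d)

/-- density of N(ν, σ²I_d) w.r.t. Lebesgue measure on ℝ^d -/
def gaussPdf (d : ℕ) (σ : ℝ) (ν x : E d) : ℝ :=
  (2 * π * σ ^ 2) ^ (-(d : ℝ) / 2) * Real.exp (-‖x - ν‖ ^ 2 / (2 * σ ^ 2))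

/-- equal-weight Gaussian mixture with means μ i and covariance σ²I -/
def mixture (d C : ℕ) (σ : ℝ) (μ : Fin C → E d) : Measure (E d) :=
  volume.withDensity fun x => ENNReal.ofReal ((1 / C : ℝ) * ∑ i : Fin C, gaussPdf d σ (μ i) x)

/-- population log-likelihood L(ν) = E_x[log((1/C) Σ_i exp(−½‖x−ν_i‖²/σ²))],
x drawn from the mixture with the true means μ. -/
def popL (d C : ℕ) (σ : ℝ) (μ ν : Fin C → E d) : ℝ :=
  ∫ x, Real.log ((1 / C : ℝ) * ∑ i : Fin C, Real.exp (-‖x - ν i‖ ^ 2 / (2 * σ ^ 2)))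
    ∂(mixture d C σ μ)

/-!
Write `ν_s` for the means with `μ i` moved to `μ i + s • u`, `K_j` for the unnormalised Gaussian
kernels, `Φ_s = ∑ j, K_j(ν_s)` and `W_s = K_i(ν_s) / Φ_s` for the responsibility of component `i`.
Everything that grows at most quadratically is integrable against a Gaussian, which justifies
differentiating twice under the integral: `L''(0) = E[W (1 - W) v² - W ‖u‖² / σ²]` with the score
`v = ⟪u, x - μ i⟫ / σ²`. Against the mixture density `∝ Φ_0` the integrand becomes
`K_i v² - K_i ‖u‖² / σ² - W K_i v²`. The first two terms cancel by Gaussian integration by parts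
(`E ⟪u, X - μ i⟫² = σ² ‖u‖²`), and what is left is minus the Fisher information
`∫ W K_i v² = ∫ (∂_s Φ)² / Φ`, which is positive because `v` is not identically zero.
-/

open Topology
open scoped RealInnerProductSpace

namespace GaussianMixture

section Kernel

variable {V : Type*} [NormedAddCommGroup V]

def gaussKernel (σ : ℝ) (m x : V) : ℝ := exp (-‖x - m‖ ^ 2 / (2 * σ ^ 2))

lemma gaussKernel_pos (σ : ℝ) (m x : V) : 0 < gaussKernel σ m x := exp_pos _

lemma gaussKernel_le_one (σ : ℝ) (m x : V) : gaussKernel σ m x ≤ 1 :=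
  exp_le_one_iff.mpr (div_nonpos_of_nonpos_of_nonneg (by simp) (by positivity))

lemma continuous_gaussKernel (σ : ℝ) (m : V) : Continuous (gaussKernel σ m) := by
  unfold gaussKernel; fun_prop

lemma gaussKernel_eq_zero_sub (σ : ℝ) (m x : V) :
    gaussKernel σ m x = gaussKernel σ 0 (x - m) := by
  simp [gaussKernel]

lemma one_add_norm_le_mul (x m : V) : 1 + ‖x‖ ≤ (1 + ‖m‖) * (1 + ‖x - m‖) := by
  nlinarith [norm_le_norm_sub_add x m, norm_nonneg m, norm_nonneg (x - m)]

lemma norm_sub_le_mul (x m : V) : ‖x - m‖ ≤ (1 + ‖m‖) * (1 + ‖x‖) := by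
  nlinarith [norm_sub_le x m, norm_nonneg x, norm_nonneg m,
    mul_nonneg (norm_nonneg x) (norm_nonneg m)]

lemma one_add_norm_sq_mul_gaussKernel_le {σ : ℝ} (hσ : σ ≠ 0) (x : V) :
    (1 + ‖x‖) ^ 2 * gaussKernel σ 0 x ≤ (2 + 8 * σ ^ 2) * gaussKernel (2 * σ) 0 x := by
  set z := 3 * ‖x‖ ^ 2 / (8 * σ ^ 2)
  have hsplit : gaussKernel σ 0 x = gaussKernel (2 * σ) 0 x * exp (-z) := by
    rw [gaussKernel, gaussKernel, ← exp_add]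
    congr 1
    simp only [z, sub_zero]
    field_simp
    ring
  have hz : ‖x‖ ^ 2 * exp (-z) ≤ 4 * σ ^ 2 := by
    have hze : z * exp (-z) ≤ 1 := (mul_exp_neg_le_exp_neg_one z).trans (by simp)
    have : ‖x‖ ^ 2 = 8 * σ ^ 2 / 3 * z := by simp only [z]; field_simp
    rw [this, mul_assoc]
    nlinarith
  have h1 : exp (-z) ≤ 1 := exp_le_one_iff.mpr (by simp only [z, neg_nonpos]; positivity)
  have hK := gaussKernel_pos (2 * σ) 0 x
  calc (1 + ‖x‖) ^ 2 * gaussKernel σ 0 x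
      = (1 + ‖x‖) ^ 2 * exp (-z) * gaussKernel (2 * σ) 0 x := by rw [hsplit]; ring
    _ ≤ (2 + 2 * ‖x‖ ^ 2) * exp (-z) * gaussKernel (2 * σ) 0 x := by
        gcongr
        nlinarith [sq_nonneg (1 - ‖x‖)]
    _ ≤ (2 + 8 * σ ^ 2) * gaussKernel (2 * σ) 0 x := by gcongr; nlinarith

end Kernel

section Responsibility

variable {V : Type*} [NormedAddCommGroup V] {C : ℕ} (σ : ℝ) (μ : Fin C → V) (i : Fin C)

def otherKernels (x : V) : ℝ := ∑ j ∈ univ.erase i, gaussKernel σ (μ j) x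

lemma otherKernels_nonneg (x : V) : 0 ≤ otherKernels σ μ i x :=
  Finset.sum_nonneg fun j _ => (gaussKernel_pos σ (μ j) x).le

lemma sum_gaussKernel_update (m x : V) :
    ∑ j, gaussKernel σ (Function.update μ i m j) x
      = otherKernels σ μ i x + gaussKernel σ m x := by
  rw [← Finset.add_sum_erase _ _ (Finset.mem_univ i), Function.update_self, add_comm,
    otherKernels]
  congr 1
  exact Finset.sum_congr rfl fun j hj => by rw [Function.update_of_ne (Finset.ne_of_mem_erase hj)]

lemma abs_log_mean_gaussKernel_le (ν : Fin C → V) (x : V) :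
    |log ((1 / C : ℝ) * ∑ j, gaussKernel σ (ν j) x)| ≤ log C + ‖x - ν i‖ ^ 2 / (2 * σ ^ 2) := by
  have hC : (0 : ℝ) < C := Nat.cast_pos.mpr i.pos
  have hKi := gaussKernel_pos σ (ν i) x
  have hsum_le : ∑ j, gaussKernel σ (ν j) x ≤ C := by
    simpa using Finset.sum_le_card_nsmul univ _ 1 fun j _ => gaussKernel_le_one σ (ν j) x
  have hsum_ge : gaussKernel σ (ν i) x ≤ ∑ j, gaussKernel σ (ν j) x :=
    Finset.single_le_sum (fun j _ => (gaussKernel_pos σ (ν j) x).le) (Finset.mem_univ i)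
  have hupper : log ((1 / C : ℝ) * ∑ j, gaussKernel σ (ν j) x) ≤ 0 := by
    rw [one_div_mul_eq_div]
    exact log_nonpos (div_nonneg (hKi.le.trans hsum_ge) hC.le) (div_le_one_of_le₀ hsum_le hC.le)
  have hlower : -log C - ‖x - ν i‖ ^ 2 / (2 * σ ^ 2)
      ≤ log ((1 / C : ℝ) * ∑ j, gaussKernel σ (ν j) x) := by
    calc -log C - ‖x - ν i‖ ^ 2 / (2 * σ ^ 2) = log ((1 / C : ℝ) * gaussKernel σ (ν i) x) := by
          rw [log_mul (by positivity) hKi.ne', one_div, log_inv, gaussKernel, log_exp]; ring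
      _ ≤ _ := log_le_log (mul_pos (one_div_pos.mpr hC) hKi) (by gcongr)
  rw [abs_of_nonpos hupper]
  linarith

def responsibility (m x : V) : ℝ :=
  gaussKernel σ m x / (otherKernels σ μ i x + gaussKernel σ m x)

lemma responsibility_pos (m x : V) : 0 < responsibility σ μ i m x :=
  div_pos (gaussKernel_pos σ m x)
    (add_pos_of_nonneg_of_pos (otherKernels_nonneg σ μ i x) (gaussKernel_pos σ m x))

lemma responsibility_le_one (m x : V) : responsibility σ μ i m x ≤ 1 :=
  div_le_one_of_le₀ (le_add_of_nonneg_left (otherKernels_nonneg σ μ i x))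
    (add_pos_of_nonneg_of_pos (otherKernels_nonneg σ μ i x) (gaussKernel_pos σ m x)).le

lemma continuous_responsibility (m : V) : Continuous (responsibility σ μ i m) :=
  (continuous_gaussKernel σ m).div
    ((continuous_finsetSum _ fun j _ => continuous_gaussKernel σ (μ j)).add
      (continuous_gaussKernel σ m))
    fun x => (add_pos_of_nonneg_of_pos (otherKernels_nonneg σ μ i x) (gaussKernel_pos σ m x)).ne'

end Responsibility

section Score

variable {V : Type*} [NormedAddCommGroup V] [InnerProductSpace ℝ V]

def score (σ : ℝ) (m u : V) (s : ℝ) (x : V) : ℝ := ⟪u, x - (m + s • u)⟫ / σ ^ 2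

lemma hasDerivAt_score (σ : ℝ) (m u x : V) (s : ℝ) :
    HasDerivAt (fun s => score σ m u s x) (-(‖u‖ ^ 2 / σ ^ 2)) s := by
  have hline : (fun s => score σ m u s x) = fun s => (⟪u, x - m⟫ - s * ‖u‖ ^ 2) / σ ^ 2 := by
    funext s
    rw [score, sub_add_eq_sub_sub, inner_sub_right, inner_smul_right, real_inner_self_eq_norm_sq]
  rw [hline]
  exact (((hasDerivAt_mul_const (x := s) (‖u‖ ^ 2)).const_sub ⟪u, x - m⟫).div_const
    (σ ^ 2)).congr_deriv (by ring)

lemma hasDerivAt_gaussKernel_add_smul (σ : ℝ) (m u x : V) (s : ℝ) :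
    HasDerivAt (fun s : ℝ => gaussKernel σ (m + s • u) x)
      (gaussKernel σ (m + s • u) x * score σ m u s x) s := by
  have hcurve : HasDerivAt (fun s : ℝ => x - (m + s • u)) (-u) s := by
    simpa using ((hasDerivAt_id s).smul_const u).const_add m |>.const_sub x
  refine (hcurve.norm_sq.neg.div_const (2 * σ ^ 2)).exp.congr_deriv ?_
  rw [inner_neg_right, real_inner_comm, gaussKernel, score, Pi.neg_apply]
  ring

lemma abs_inner_sub_le (u x m : V) : |⟪u, x - m⟫| ≤ ‖u‖ * (1 + ‖m‖) * (1 + ‖x‖) := by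
  rw [mul_assoc]
  exact (abs_real_inner_le_norm u (x - m)).trans
    (mul_le_mul_of_nonneg_left (norm_sub_le_mul x m) (norm_nonneg u))

lemma abs_score_le (σ : ℝ) (m u x : V) {s R : ℝ} (hs : |s| ≤ R) :
    |score σ m u s x| ≤ ‖u‖ * (1 + ‖m‖ + R * ‖u‖) / σ ^ 2 * (1 + ‖x‖) := by
  have hm : ‖m + s • u‖ ≤ ‖m‖ + R * ‖u‖ := by
    refine (norm_add_le _ _).trans ?_
    rw [norm_smul, Real.norm_eq_abs]
    gcongr
  rw [score, abs_div, abs_of_nonneg (sq_nonneg σ), div_mul_eq_mul_div]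
  gcongr
  refine (abs_inner_sub_le u x _).trans ?_
  gcongr ‖u‖ * ?_ * _
  linarith

lemma hasLineDerivAt_inner_sub (u m x : V) :
    HasLineDerivAt ℝ (fun x => ⟪u, x - m⟫) (‖u‖ ^ 2) x u := by
  have hline : (fun t : ℝ => ⟪u, x + t • u - m⟫) = fun t => ⟪u, x - m⟫ + t * ‖u‖ ^ 2 := by
    funext t
    rw [add_sub_right_comm, inner_add_right, inner_smul_right, real_inner_self_eq_norm_sq]
  show HasDerivAt (fun t : ℝ => ⟪u, x + t • u - m⟫) _ 0
  rw [hline]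
  simpa using (hasDerivAt_mul_const (‖u‖ ^ 2)).const_add ⟪u, x - m⟫

lemma hasLineDerivAt_gaussKernel (σ : ℝ) (m u x : V) :
    HasLineDerivAt ℝ (gaussKernel σ m) (-(⟪u, x - m⟫ * gaussKernel σ m x / σ ^ 2)) x u := by
  have hline : (fun t : ℝ => gaussKernel σ m (x + t • u))
      = fun t => gaussKernel σ (m + t • -u) x := by
    funext t
    rw [gaussKernel, gaussKernel, show x + t • u - m = x - (m + t • -u) by module]
  show HasDerivAt (fun t : ℝ => gaussKernel σ m (x + t • u)) _ 0
  rw [hline]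
  refine (hasDerivAt_gaussKernel_add_smul σ m (-u) x 0).congr_deriv ?_
  simp only [score, zero_smul, add_zero, inner_neg_left]
  ring

variable {C : ℕ} (σ : ℝ) (μ : Fin C → V) (i : Fin C) (u : V)

lemma hasDerivAt_log_mean_gaussKernel_update (x : V) (s : ℝ) :
    HasDerivAt
      (fun s => log ((1 / C : ℝ) * ∑ j, gaussKernel σ (Function.update μ i (μ i + s • u) j) x))
      (responsibility σ μ i (μ i + s • u) x * score σ (μ i) u s x) s := by
  have hC : (0 : ℝ) < C := Nat.cast_pos.mpr i.pos
  have hΦ := add_pos_of_nonneg_of_pos (otherKernels_nonneg σ μ i x)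
    (gaussKernel_pos σ (μ i + s • u) x)
  simp only [sum_gaussKernel_update]
  refine ((((hasDerivAt_gaussKernel_add_smul σ (μ i) u x s).const_add
    (otherKernels σ μ i x)).const_mul (1 / C : ℝ)).log (by positivity)).congr_deriv ?_
  rw [responsibility]
  field_simp

lemma hasDerivAt_responsibility (x : V) (s : ℝ) :
    HasDerivAt (fun s => responsibility σ μ i (μ i + s • u) x)
      (responsibility σ μ i (μ i + s • u) x * (1 - responsibility σ μ i (μ i + s • u) x)
        * score σ (μ i) u s x) s := by
  have hΦ := add_pos_of_nonneg_of_pos (otherKernels_nonneg σ μ i x)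
    (gaussKernel_pos σ (μ i + s • u) x)
  have hK := hasDerivAt_gaussKernel_add_smul σ (μ i) u x s
  refine (hK.fun_div (hK.const_add (otherKernels σ μ i x)) hΦ.ne').congr_deriv ?_
  simp only [responsibility]
  field_simp

lemma hasDerivAt_responsibility_mul_score (x : V) (s : ℝ) :
    HasDerivAt (fun s => responsibility σ μ i (μ i + s • u) x * score σ (μ i) u s x)
      (responsibility σ μ i (μ i + s • u) x * (1 - responsibility σ μ i (μ i + s • u) x)
          * score σ (μ i) u s x ^ 2
        - responsibility σ μ i (μ i + s • u) x * (‖u‖ ^ 2 / σ ^ 2)) s :=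
  ((hasDerivAt_responsibility σ μ i u x s).mul
    (hasDerivAt_score σ (μ i) u x s)).congr_deriv (by ring)

lemma abs_responsibility_mul_score_le (x : V) {s R : ℝ} (hs : |s| ≤ R) :
    |responsibility σ μ i (μ i + s • u) x * score σ (μ i) u s x|
      ≤ ‖u‖ * (1 + ‖μ i‖ + R * ‖u‖) / σ ^ 2 * (1 + ‖x‖) ^ 2 := by
  have hx : 1 + ‖x‖ ≤ (1 + ‖x‖) ^ 2 := le_self_pow₀ (by linarith [norm_nonneg x]) two_ne_zero
  have hR : 0 ≤ R := (abs_nonneg s).trans hs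
  rw [abs_mul, abs_of_pos (responsibility_pos σ μ i _ x)]
  calc _ ≤ |score σ (μ i) u s x| :=
        mul_le_of_le_one_left (abs_nonneg _) (responsibility_le_one σ μ i _ x)
    _ ≤ ‖u‖ * (1 + ‖μ i‖ + R * ‖u‖) / σ ^ 2 * (1 + ‖x‖) := abs_score_le σ (μ i) u x hs
    _ ≤ _ := by gcongr

lemma abs_hessian_integrand_le (x : V) {s R : ℝ} (hs : |s| ≤ R) :
    |responsibility σ μ i (μ i + s • u) x * (1 - responsibility σ μ i (μ i + s • u) x)
        * score σ (μ i) u s x ^ 2 - responsibility σ μ i (μ i + s • u) x * (‖u‖ ^ 2 / σ ^ 2)|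
      ≤ ((‖u‖ * (1 + ‖μ i‖ + R * ‖u‖) / σ ^ 2) ^ 2 + ‖u‖ ^ 2 / σ ^ 2) * (1 + ‖x‖) ^ 2 := by
  set W := responsibility σ μ i (μ i + s • u) x
  have h0 := responsibility_pos σ μ i (μ i + s • u) x
  have h1 := responsibility_le_one σ μ i (μ i + s • u) x
  have hx : 1 ≤ (1 + ‖x‖) ^ 2 := one_le_pow₀ (by linarith [norm_nonneg x])
  have hv : score σ (μ i) u s x ^ 2
      ≤ (‖u‖ * (1 + ‖μ i‖ + R * ‖u‖) / σ ^ 2) ^ 2 * (1 + ‖x‖) ^ 2 := by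
    rw [← mul_pow, ← sq_abs]
    exact pow_le_pow_left₀ (abs_nonneg _) (abs_score_le σ (μ i) u x hs) 2
  have hk : ‖u‖ ^ 2 / σ ^ 2 ≤ ‖u‖ ^ 2 / σ ^ 2 * (1 + ‖x‖) ^ 2 :=
    le_mul_of_one_le_right (by positivity) hx
  have hW : 0 ≤ W * (1 - W) := by nlinarith
  have hW' : W * (1 - W) ≤ 1 := by nlinarith
  have hv0 := sq_nonneg (score σ (μ i) u s x)
  have hk0 : 0 ≤ ‖u‖ ^ 2 / σ ^ 2 := by positivity
  rw [abs_le]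
  constructor <;> nlinarith [mul_nonneg hW hv0, mul_le_mul_of_nonneg_right hW' hv0,
    mul_nonneg h0.le hk0, mul_le_mul_of_nonneg_right h1 hk0]

end Score

section Integral

variable {V : Type*} [NormedAddCommGroup V] [InnerProductSpace ℝ V] [FiniteDimensional ℝ V]
  [MeasurableSpace V] [BorelSpace V] {σ : ℝ}

lemma integrable_gaussKernel (hσ : σ ≠ 0) (m : V) : Integrable (gaussKernel σ m) := by
  have hb : 0 < ((2 * σ ^ 2)⁻¹ : ℝ) := by positivity
  have h := (GaussianFourier.integrable_cexp_neg_mul_sq_norm_add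
    (b := ((2 * σ ^ 2)⁻¹ : ℝ)) (by rwa [Complex.ofReal_re]) 0 (0 : V)).norm
  have h0 : Integrable (gaussKernel σ (0 : V)) := by
    refine h.congr (.of_forall fun x => ?_)
    have : -((2 * σ ^ 2)⁻¹ : ℝ) * (‖x‖ : ℂ) ^ 2 + 0 * (⟪(0 : V), x⟫ : ℂ)
        = ((-‖x‖ ^ 2 / (2 * σ ^ 2) : ℝ) : ℂ) := by
      push_cast; ring
    simp only [this, Complex.norm_exp_ofReal, gaussKernel, sub_zero]
  simpa only [← gaussKernel_eq_zero_sub] using h0.comp_sub_right m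

lemma integrable_one_add_norm_sq_mul_gaussKernel (hσ : σ ≠ 0) :
    Integrable (fun x : V => (1 + ‖x‖) ^ 2 * gaussKernel σ 0 x) := by
  refine ((integrable_gaussKernel (σ := 2 * σ) (by simpa using hσ) 0).const_mul
    (2 + 8 * σ ^ 2)).mono' (by unfold gaussKernel; fun_prop) (.of_forall fun x => ?_)
  rw [Real.norm_of_nonneg (by positivity [gaussKernel_pos σ 0 x])]
  exact one_add_norm_sq_mul_gaussKernel_le hσ x

lemma integrable_mul_gaussKernel (hσ : σ ≠ 0) {g : V → ℝ} (hg : AEStronglyMeasurable g) {c : ℝ}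
    (hgc : ∀ x, |g x| ≤ c * (1 + ‖x‖) ^ 2) (m : V) :
    Integrable (fun x => g x * gaussKernel σ m x) := by
  have hc : 0 ≤ c := by simpa using (abs_nonneg _).trans (hgc 0)
  refine (((integrable_one_add_norm_sq_mul_gaussKernel hσ).comp_sub_right m).const_mul
    (c * (1 + ‖m‖) ^ 2)).mono' (hg.mul (continuous_gaussKernel σ m).aestronglyMeasurable)
    (.of_forall fun x => ?_)
  have hK := gaussKernel_pos σ m x
  have hx : (1 + ‖x‖) ^ 2 ≤ ((1 + ‖m‖) * (1 + ‖x - m‖)) ^ 2 :=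
    pow_le_pow_left₀ (by positivity) (one_add_norm_le_mul x m) 2
  rw [norm_mul, Real.norm_eq_abs, Real.norm_of_nonneg hK.le, ← gaussKernel_eq_zero_sub]
  calc |g x| * gaussKernel σ m x ≤ c * (1 + ‖x‖) ^ 2 * gaussKernel σ m x := by
        gcongr; exact hgc x
    _ ≤ c * ((1 + ‖m‖) * (1 + ‖x - m‖)) ^ 2 * gaussKernel σ m x := by gcongr
    _ = _ := by ring

lemma integrable_inner_sub_sq_mul_gaussKernel (hσ : σ ≠ 0) (u m : V) :
    Integrable (fun x => ⟪u, x - m⟫ ^ 2 * gaussKernel σ m x) :=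
  integrable_mul_gaussKernel hσ (by fun_prop) (c := (‖u‖ * (1 + ‖m‖)) ^ 2) (fun x => by
    rw [abs_pow, ← mul_pow]
    exact pow_le_pow_left₀ (abs_nonneg _) (abs_inner_sub_le u x m) 2) m

lemma integrable_inner_sub_mul_gaussKernel (hσ : σ ≠ 0) (u m : V) :
    Integrable (fun x => ⟪u, x - m⟫ * gaussKernel σ m x) :=
  integrable_mul_gaussKernel hσ (by fun_prop) (c := ‖u‖ * (1 + ‖m‖)) (fun x => by
    have hx : 1 + ‖x‖ ≤ (1 + ‖x‖) ^ 2 := le_self_pow₀ (by linarith [norm_nonneg x]) two_ne_zero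
    exact (abs_inner_sub_le u x m).trans (by gcongr)) m

lemma integral_inner_sub_sq_mul_gaussKernel (hσ : σ ≠ 0) (u m : V) :
    ∫ x, ⟪u, x - m⟫ ^ 2 * gaussKernel σ m x = σ ^ 2 * ‖u‖ ^ 2 * ∫ x, gaussKernel σ m x := by
  have ibp := integral_bilinear_hasLineDerivAt_right_eq_neg_left_of_integrable
    (B := ContinuousLinearMap.mul ℝ ℝ)
    ((integrable_gaussKernel hσ m).const_mul (‖u‖ ^ 2))
    (((integrable_inner_sub_sq_mul_gaussKernel hσ u m).div_const (σ ^ 2)).neg.congr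
      (.of_forall fun x => by simp only [Pi.neg_apply, ContinuousLinearMap.mul_apply']; ring))
    (integrable_inner_sub_mul_gaussKernel hσ u m)
    (fun x _ => hasLineDerivAt_inner_sub u m x) (fun x _ => hasLineDerivAt_gaussKernel σ m u x)
  have hlhs : ∀ x, ⟪u, x - m⟫ * -(⟪u, x - m⟫ * gaussKernel σ m x / σ ^ 2)
      = -(⟪u, x - m⟫ ^ 2 * gaussKernel σ m x / σ ^ 2) := fun x => by ring
  simp only [ContinuousLinearMap.mul_apply', hlhs, integral_neg, integral_div, integral_const_mul,
    neg_inj] at ibp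
  field_simp at ibp
  linear_combination ibp

variable {C : ℕ} (μ : Fin C → V) (i : Fin C) (u : V)

lemma integrable_responsibility_mul_gaussKernel_mul_score_sq (hσ : σ ≠ 0) :
    Integrable fun x =>
      responsibility σ μ i (μ i) x * gaussKernel σ (μ i) x * score σ (μ i) u 0 x ^ 2 := by
  refine ((integrable_inner_sub_sq_mul_gaussKernel hσ u (μ i)).div_const (σ ^ 2 * σ ^ 2)).mono'
    (by have := continuous_responsibility σ μ i (μ i); unfold gaussKernel score; fun_prop)
    (.of_forall fun x => ?_)
  have hW0 := responsibility_pos σ μ i (μ i) x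
  have hW1 := responsibility_le_one σ μ i (μ i) x
  have hK := gaussKernel_pos σ (μ i) x
  rw [Real.norm_of_nonneg (by positivity), mul_comm (responsibility σ μ i (μ i) x), mul_assoc]
  calc _ ≤ gaussKernel σ (μ i) x * (1 * score σ (μ i) u 0 x ^ 2) := by gcongr
    _ = _ := by simp only [score, zero_smul, add_zero]; ring

lemma integral_sum_gaussKernel_mul_hessian_integrand (hσ : σ ≠ 0) :
    ∫ x, (∑ j, gaussKernel σ (μ j) x)
        * (responsibility σ μ i (μ i) x * (1 - responsibility σ μ i (μ i) x)
            * score σ (μ i) u 0 x ^ 2 - responsibility σ μ i (μ i) x * (‖u‖ ^ 2 / σ ^ 2))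
      = -∫ x, responsibility σ μ i (μ i) x * gaussKernel σ (μ i) x * score σ (μ i) u 0 x ^ 2 := by
  have hpt : ∀ x, (∑ j, gaussKernel σ (μ j) x)
        * (responsibility σ μ i (μ i) x * (1 - responsibility σ μ i (μ i) x)
            * score σ (μ i) u 0 x ^ 2 - responsibility σ μ i (μ i) x * (‖u‖ ^ 2 / σ ^ 2))
      = (⟪u, x - μ i⟫ ^ 2 * gaussKernel σ (μ i) x / (σ ^ 2 * σ ^ 2)
          - ‖u‖ ^ 2 / σ ^ 2 * gaussKernel σ (μ i) x)
        - responsibility σ μ i (μ i) x * gaussKernel σ (μ i) x * score σ (μ i) u 0 x ^ 2 := by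
    intro x
    have hΦ := add_pos_of_nonneg_of_pos (otherKernels_nonneg σ μ i x) (gaussKernel_pos σ (μ i) x)
    have hsum := sum_gaussKernel_update σ μ i (μ i) x
    rw [Function.update_eq_self] at hsum
    rw [hsum]
    simp only [responsibility, score, zero_smul, add_zero]
    field_simp
    ring
  simp only [hpt]
  rw [integral_sub (((integrable_inner_sub_sq_mul_gaussKernel hσ u (μ i)).div_const _).sub'
      ((integrable_gaussKernel hσ (μ i)).const_mul _))
      (integrable_responsibility_mul_gaussKernel_mul_score_sq μ i u hσ),
    integral_sub ((integrable_inner_sub_sq_mul_gaussKernel hσ u (μ i)).div_const _)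
      ((integrable_gaussKernel hσ (μ i)).const_mul _),
    integral_div, integral_const_mul, integral_inner_sub_sq_mul_gaussKernel hσ]
  field_simp
  ring

lemma integral_responsibility_mul_gaussKernel_mul_score_sq_pos (hσ : σ ≠ 0) (hu : u ≠ 0) :
    0 < ∫ x, responsibility σ μ i (μ i) x * gaussKernel σ (μ i) x * score σ (μ i) u 0 x ^ 2 := by
  refine integral_pos_of_integrable_nonneg_nonzero (x := μ i + u)
    (by have := continuous_responsibility σ μ i (μ i); unfold gaussKernel score; fun_prop)
    (integrable_responsibility_mul_gaussKernel_mul_score_sq μ i u hσ)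
    (fun x => by
      have := responsibility_pos σ μ i (μ i) x
      have := gaussKernel_pos σ (μ i) x
      positivity) ?_
  have hv : score σ (μ i) u 0 (μ i + u) ≠ 0 := by
    simp only [score, zero_smul, add_zero, add_sub_cancel_left, real_inner_self_eq_norm_sq]
    positivity
  exact mul_ne_zero (mul_ne_zero (responsibility_pos σ μ i _ _).ne' (gaussKernel_pos σ _ _).ne')
    (pow_ne_zero 2 hv)

end Integral

section Mixture

variable {d C : ℕ} {σ : ℝ} {μ : Fin C → E d}

lemma mixture_density_eq (x : E d) :
    (1 / C : ℝ) * ∑ j, gaussPdf d σ (μ j) x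
      = (2 * π * σ ^ 2) ^ (-(d : ℝ) / 2) / C * ∑ j, gaussKernel σ (μ j) x := by
  simp only [gaussPdf, gaussKernel, Finset.mul_sum]
  exact Finset.sum_congr rfl fun j _ => by ring

lemma mixture_density_nonneg (x : E d) : 0 ≤ (1 / C : ℝ) * ∑ j, gaussPdf d σ (μ j) x := by
  rw [mixture_density_eq]
  exact mul_nonneg (by positivity) (Finset.sum_nonneg fun j _ => (gaussKernel_pos σ (μ j) x).le)

lemma measurable_mixture_density :
    Measurable fun x : E d => ENNReal.ofReal ((1 / C : ℝ) * ∑ j, gaussPdf d σ (μ j) x) := by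
  unfold gaussPdf; fun_prop

lemma integral_mixture (g : E d → ℝ) :
    ∫ x, g x ∂mixture d C σ μ
      = (2 * π * σ ^ 2) ^ (-(d : ℝ) / 2) / C * ∫ x, (∑ j, gaussKernel σ (μ j) x) * g x := by
  rw [mixture, integral_withDensity_eq_integral_toReal_smul measurable_mixture_density
    (.of_forall fun _ => ENNReal.ofReal_lt_top), ← integral_const_mul]
  congr 1 with x
  rw [ENNReal.toReal_ofReal (mixture_density_nonneg x), smul_eq_mul, mixture_density_eq, mul_assoc]

lemma integrable_mixture (hσ : σ ≠ 0) {g : E d → ℝ} (hg : AEStronglyMeasurable g) {c : ℝ}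
    (hgc : ∀ x, |g x| ≤ c * (1 + ‖x‖) ^ 2) : Integrable g (mixture d C σ μ) := by
  rw [mixture, integrable_withDensity_iff_integrable_smul' measurable_mixture_density
    (.of_forall fun _ => ENNReal.ofReal_lt_top)]
  refine (integrable_finsetSum Finset.univ fun j (_ : j ∈ Finset.univ) =>
    (integrable_mul_gaussKernel hσ hg hgc (μ j)).const_mul
      ((2 * π * σ ^ 2) ^ (-(d : ℝ) / 2) / C)).congr (.of_forall fun x => ?_)
  dsimp only
  rw [smul_eq_mul, ENNReal.toReal_ofReal (mixture_density_nonneg x), mixture_density_eq,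
    Finset.mul_sum, Finset.sum_mul]
  exact Finset.sum_congr rfl fun j _ => by ring

end Mixture

section Hessian

variable {d C : ℕ} {σ : ℝ} (μ : Fin C → E d) (i : Fin C) (u : E d)

lemma integrable_mixture_one_add_norm_sq (hσ : σ ≠ 0) :
    Integrable (fun x : E d => (1 + ‖x‖) ^ 2) (mixture d C σ μ) :=
  integrable_mixture hσ (by fun_prop) (c := 1) fun x => by rw [abs_of_nonneg (by positivity), one_mul]

lemma Icc_abs_add_one_mem_nhds (s₀ : ℝ) : Set.Icc (-(|s₀| + 1)) (|s₀| + 1) ∈ 𝓝 s₀ :=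
  Icc_mem_nhds (by linarith [neg_abs_le s₀]) (by linarith [le_abs_self s₀])

lemma measurable_log_mean_gaussKernel (σ : ℝ) (ν : Fin C → E d) :
    Measurable fun x => log ((1 / C : ℝ) * ∑ j, gaussKernel σ (ν j) x) := by
  have := fun j => continuous_gaussKernel σ (ν j)
  fun_prop

lemma integrable_log_mean_gaussKernel (hσ : σ ≠ 0) (i : Fin C) (ν : Fin C → E d) :
    Integrable (fun x => log ((1 / C : ℝ) * ∑ j, gaussKernel σ (ν j) x)) (mixture d C σ μ) := by
  have hlog : 0 ≤ log C := log_nonneg (by exact_mod_cast i.pos)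
  refine integrable_mixture hσ (measurable_log_mean_gaussKernel σ ν).aestronglyMeasurable
    (c := log C + (1 + ‖ν i‖) ^ 2 / (2 * σ ^ 2)) fun x => ?_
  have hx : ‖x - ν i‖ ^ 2 ≤ (1 + ‖ν i‖) ^ 2 * (1 + ‖x‖) ^ 2 := by
    rw [← mul_pow]; exact pow_le_pow_left₀ (norm_nonneg _) (norm_sub_le_mul x (ν i)) 2
  have h1 : 1 ≤ (1 + ‖x‖) ^ 2 := one_le_pow₀ (by linarith [norm_nonneg x])
  refine (abs_log_mean_gaussKernel_le σ i ν x).trans ?_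
  rw [add_mul, div_mul_eq_mul_div]
  gcongr
  exact le_mul_of_one_le_right hlog h1

lemma hasDerivAt_popL_update (hσ : σ ≠ 0) (s₀ : ℝ) :
    HasDerivAt (fun s => popL d C σ μ (Function.update μ i (μ i + s • u)))
      (∫ x, responsibility σ μ i (μ i + s₀ • u) x * score σ (μ i) u s₀ x ∂mixture d C σ μ) s₀ :=
  (hasDerivAt_integral_of_dominated_loc_of_deriv_le (Icc_abs_add_one_mem_nhds s₀)
    (.of_forall fun s => (measurable_log_mean_gaussKernel σ _).aestronglyMeasurable)
    (integrable_log_mean_gaussKernel μ hσ i _)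
    (((continuous_responsibility σ μ i _).mul (by unfold score; fun_prop)).aestronglyMeasurable)
    (.of_forall fun x s hs => abs_responsibility_mul_score_le σ μ i u x (abs_le.mpr hs))
    ((integrable_mixture_one_add_norm_sq μ hσ).const_mul _)
    (.of_forall fun x s _ => hasDerivAt_log_mean_gaussKernel_update σ μ i u x s)).2

lemma hasDerivAt_integral_responsibility_mul_score (hσ : σ ≠ 0) (s₀ : ℝ) :
    HasDerivAt (fun s => ∫ x, responsibility σ μ i (μ i + s • u) x * score σ (μ i) u s x
        ∂mixture d C σ μ)
      (∫ x, responsibility σ μ i (μ i + s₀ • u) x * (1 - responsibility σ μ i (μ i + s₀ • u) x)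
          * score σ (μ i) u s₀ x ^ 2 - responsibility σ μ i (μ i + s₀ • u) x * (‖u‖ ^ 2 / σ ^ 2)
        ∂mixture d C σ μ) s₀ := by
  have hW := continuous_responsibility σ μ i
  have hv : ∀ s, Continuous (score σ (μ i) u s) := fun s => by unfold score; fun_prop
  exact (hasDerivAt_integral_of_dominated_loc_of_deriv_le (Icc_abs_add_one_mem_nhds s₀)
    (.of_forall fun s => ((hW (μ i + s • u)).mul (hv s)).aestronglyMeasurable)
    (integrable_mixture hσ ((hW (μ i + s₀ • u)).mul (hv s₀)).aestronglyMeasurable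
      fun x => abs_responsibility_mul_score_le σ μ i u x le_rfl)
    (by fun_prop) (.of_forall fun x s hs => abs_hessian_integrand_le σ μ i u x (abs_le.mpr hs))
    ((integrable_mixture_one_add_norm_sq μ hσ).const_mul _)
    (.of_forall fun x s _ => hasDerivAt_responsibility_mul_score σ μ i u x s)).2

lemma deriv_deriv_popL_update (hσ : σ ≠ 0) :
    deriv (deriv fun s : ℝ => popL d C σ μ (Function.update μ i (μ i + s • u))) 0
      = ∫ x, responsibility σ μ i (μ i) x * (1 - responsibility σ μ i (μ i) x)
          * score σ (μ i) u 0 x ^ 2 - responsibility σ μ i (μ i) x * (‖u‖ ^ 2 / σ ^ 2)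
        ∂mixture d C σ μ := by
  rw [funext fun s => (hasDerivAt_popL_update μ i u hσ s).deriv,
    (hasDerivAt_integral_responsibility_mul_score μ i u hσ 0).deriv]
  simp only [zero_smul, add_zero]

end Hessian

end GaussianMixture

open GaussianMixture

theorem hessian_block_negative_definite_general
    (d C : ℕ) (σ : ℝ) (hσ : 0 < σ)
    (μ : Fin C → E d) (i : Fin C) (u : E d) (hu : u ≠ 0) :
    deriv (deriv fun s : ℝ =>
        popL d C σ μ (Function.update μ i (μ i + s • u))) 0 < 0 := by
  have hC : (0 : ℝ) < C := Nat.cast_pos.mpr i.pos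
  rw [deriv_deriv_popL_update μ i u hσ.ne', integral_mixture,
    integral_sum_gaussKernel_mul_hessian_integrand μ i u hσ.ne', mul_neg, neg_lt_zero]
  exact mul_pos (by positivity)
    (integral_responsibility_mul_gaussKernel_mul_score_sq_pos μ i u hσ.ne' hu)

/-- Lemma 2 of the paper: negative definiteness of each Hessian block
of L at the true means. -/
theorem hessian_block_negative_definite
    (d C : ℕ) (hd : 1 ≤ d) (hC : 2 ≤ C) (σ : ℝ) (hσ : 0 < σ)
    (μ : Fin C → E d) (i : Fin C) (u : E d) (hu : u ≠ 0) :
    deriv (deriv fun s : ℝ =>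
        popL d C σ μ (Function.update μ i (μ i + s • u))) 0 < 0 :=
  hessian_block_negative_definite_general d C σ hσ μ i u hu

end
end

section
/- Let d ≥ 1, C ≥ 2, σ > 0, and define G(W) = E_M[ M (diag(1/C,…,1/C) − (1/C²)𝟙𝟙ᵀ) Mᵀ ] · (σ²W − I_d) for W ∈ ℝ^{d×d}, where M ∈ ℝ^{d×C} has i.i.d. N(0,1) entries and 𝟙 ∈ ℝ^C is the all-ones vector. Then for every W ∈ ℝ^{d×d}: (i) the Frobenius inner product satisfies ⟨W − σ⁻²I_d, G(W)⟩_F = σ²(1 − 1/C)·‖W − σ⁻²I_d‖_F², and (ii) ‖G(W)‖_F = σ²(1 − 1/C)·‖W − σ⁻²I_d‖_F. -/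
/-!
Statement 11: alignment and norm identities for the population gradient map
G(W) = E_M[M(diag(1/C) − (1/C²)𝟙𝟙ᵀ)Mᵀ]·(σ²W − I):
⟨W − σ⁻²I, G(W)⟩_F = σ²(1 − 1/C)‖W − σ⁻²I‖_F² and
‖G(W)‖_F = σ²(1 − 1/C)‖W − σ⁻²I‖_F.
-/

open MeasureTheory ProbabilityTheory Finset

noncomputable section

/-- law of a d×C matrix with i.i.d. standard Gaussian entries. -/
def stdMatGauss (d C : ℕ) : Measure (Fin d → Fin C → ℝ) :=
  Measure.pi fun _ : Fin d => Measure.pi fun _ : Fin C => gaussianReal 0 1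

/-- the C×C matrix diag(1/C,…,1/C) − (1/C²)𝟙𝟙ᵀ. -/
def Amat (C : ℕ) : Matrix (Fin C) (Fin C) ℝ :=
  ((1 : ℝ) / C) • (1 : Matrix (Fin C) (Fin C) ℝ) -
    ((1 : ℝ) / (C : ℝ) ^ 2) • Matrix.of (fun _ _ => (1 : ℝ))

/-- entrywise expectation E_M[M(diag(1/C) − (1/C²)𝟙𝟙ᵀ)Mᵀ]. -/
def EMAMt (d C : ℕ) : Matrix (Fin d) (Fin d) ℝ :=
  Matrix.of fun a b =>
    ∫ m : Fin d → Fin C → ℝ,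
      (Matrix.of m * Amat C * (Matrix.of m).transpose) a b ∂(stdMatGauss d C)

/-- the population gradient map G(W). -/
def Gmap (d C : ℕ) (σ : ℝ) (W : Matrix (Fin d) (Fin d) ℝ) : Matrix (Fin d) (Fin d) ℝ :=
  EMAMt d C * (σ ^ 2 • W - 1)

/-- Frobenius inner product. -/
def frobInner {d : ℕ} (A B : Matrix (Fin d) (Fin d) ℝ) : ℝ :=
  ∑ a : Fin d, ∑ b : Fin d, A a b * B a b

/-- Frobenius norm. -/
def frobNorm {d : ℕ} (A : Matrix (Fin d) (Fin d) ℝ) : ℝ :=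
  Real.sqrt (frobInner A A)

/-!
Entries of a standard Gaussian matrix `M` are uncorrelated with unit variance,
`E[M_ak M_bl] = δ_ab δ_kl`, so `E[M A Mᵀ] = (tr A) • 1` for every `A`. Since `tr (Amat C) = 1 - 1/C`,
`G(W) = σ²(1 - 1/C) • (W - σ⁻² • 1)` is a nonnegative multiple of `W - σ⁻² • 1`, and both identities
follow.
-/

lemma integral_sq_gaussianReal (μ : ℝ) (v : NNReal) :
    ∫ x, x ^ 2 ∂gaussianReal μ v = μ ^ 2 + v := by
  have h := variance_eq_sub (memLp_id_gaussianReal (μ := μ) (v := v) 2)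
  simp only [variance_id_gaussianReal, Pi.pow_apply, id_eq, integral_id_gaussianReal] at h
  linarith

lemma integral_comp_eval_mul_comp_eval_pi {ι Ω : Type*} [Fintype ι] [DecidableEq ι]
    [MeasurableSpace Ω] (ν : Measure Ω) [IsProbabilityMeasure ν] {f g : Ω → ℝ}
    (hf : Measurable f) (hg : Measurable g) (p q : ι) :
    ∫ x, f (x p) * g (x q) ∂Measure.pi (fun _ => ν) =
      if p = q then ∫ ω, f ω * g ω ∂ν else (∫ ω, f ω ∂ν) * ∫ ω, g ω ∂ν := by
  split_ifs with hpq
  · subst hpq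
    exact integral_comp_eval (μ := fun _ => ν) (f := fun ω => f ω * g ω)
      (hf.mul hg).aestronglyMeasurable
  · have hind : IndepFun (fun x : ι → Ω => f (x p)) (fun x => g (x q)) (Measure.pi fun _ => ν) :=
      ((iIndepFun_pi (X := fun _ => id) fun _ => aemeasurable_id).indepFun hpq).comp hf hg
    rw [hind.integral_fun_mul_eq_mul_integral
        (hf.comp (measurable_pi_apply p)).aestronglyMeasurable
        (hg.comp (measurable_pi_apply q)).aestronglyMeasurable,
      integral_comp_eval hf.aestronglyMeasurable, integral_comp_eval hg.aestronglyMeasurable]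

lemma integral_stdMatGauss_entry_mul_entry {d C : ℕ} (a b : Fin d) (i j : Fin C) :
    ∫ m, m a i * m b j ∂stdMatGauss d C = if a = b ∧ i = j then 1 else 0 := by
  have hrow : ∀ i j : Fin C,
      ∫ r : Fin C → ℝ, r i * r j ∂Measure.pi (fun _ => gaussianReal 0 1) =
        if i = j then 1 else 0 := by
    intro i j
    refine (integral_comp_eval_mul_comp_eval_pi _ measurable_id measurable_id i j).trans ?_
    split_ifs
    · simpa [← sq] using integral_sq_gaussianReal 0 1
    · simp [integral_id_gaussianReal]
  refine (integral_comp_eval_mul_comp_eval_pi (Measure.pi fun _ : Fin C => gaussianReal 0 1)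
    (measurable_pi_apply i) (measurable_pi_apply j) a b).trans ?_
  by_cases hab : a = b
  · simp [hab, hrow]
  · simp [hab, integral_eval, integral_id_gaussianReal]

lemma integrable_stdMatGauss_entry_mul_entry {d C : ℕ} (a b : Fin d) (i j : Fin C) :
    Integrable (fun m => m a i * m b j) (stdMatGauss d C) := by
  have hentry : ∀ a i, MemLp (fun m : Fin d → Fin C → ℝ => m a i) 2 (stdMatGauss d C) :=
    fun a i => ((memLp_id_gaussianReal' 2 (by simp)).comp_measurePreserving
      (measurePreserving_eval (fun _ : Fin C => gaussianReal 0 1) i)).comp_measurePreserving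
      (measurePreserving_eval (fun _ : Fin d => Measure.pi fun _ => gaussianReal 0 1) a)
  exact (hentry a i).integrable_mul (hentry b j)

lemma integral_mul_mul_transpose_stdMatGauss {d C : ℕ} (A : Matrix (Fin C) (Fin C) ℝ)
    (a b : Fin d) :
    ∫ m, (Matrix.of m * A * (Matrix.of m).transpose) a b ∂stdMatGauss d C =
      (A.trace • (1 : Matrix (Fin d) (Fin d) ℝ)) a b := by
  have hexpand : ∀ m : Fin d → Fin C → ℝ,
      (Matrix.of m * A * (Matrix.of m).transpose) a b =
        ∑ k, ∑ l, A l k * (m a l * m b k) := fun m => by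
    simp only [Matrix.mul_apply, Matrix.transpose_apply, Matrix.of_apply, Finset.sum_mul]
    exact Finset.sum_congr rfl fun k _ => Finset.sum_congr rfl fun l _ => by ring
  simp_rw [hexpand]
  rw [integral_finsetSum _ fun k _ => integrable_finsetSum _ fun l _ =>
    (integrable_stdMatGauss_entry_mul_entry a b l k).const_mul _]
  have hcolumn : ∀ k, ∫ m, ∑ l, A l k * (m a l * m b k) ∂stdMatGauss d C =
      ∑ l, A l k * if a = b ∧ l = k then 1 else 0 := fun k => by
    rw [integral_finsetSum _ fun l _ =>
      (integrable_stdMatGauss_entry_mul_entry a b l k).const_mul _]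
    simp_rw [integral_const_mul, integral_stdMatGauss_entry_mul_entry]
  simp_rw [hcolumn]
  by_cases hab : a = b
  · simp [hab, Matrix.trace]
  · simp [hab]

lemma EMAMt_eq_trace_smul_one (d C : ℕ) : EMAMt d C = (Amat C).trace • 1 := by
  ext a b
  exact integral_mul_mul_transpose_stdMatGauss (Amat C) a b

lemma trace_Amat {C : ℕ} (hC : C ≠ 0) : (Amat C).trace = 1 - 1 / C := by
  simp only [Matrix.trace, Amat, Matrix.diag_apply, Matrix.sub_apply, Matrix.smul_apply,
    Matrix.one_apply_eq, Matrix.of_apply, smul_eq_mul, mul_one, sum_sub_distrib, sum_const,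
    card_univ, Fintype.card_fin, nsmul_eq_mul]
  field_simp

lemma Gmap_eq_smul {d C : ℕ} {σ : ℝ} (hC : C ≠ 0) (hσ : σ ≠ 0) (W : Matrix (Fin d) (Fin d) ℝ) :
    Gmap d C σ W = (σ ^ 2 * (1 - 1 / (C : ℝ))) • (W - (σ ^ 2)⁻¹ • 1) := by
  have hshift : σ ^ 2 • (W - (σ ^ 2)⁻¹ • 1) = σ ^ 2 • W - 1 := by
    rw [smul_sub, smul_smul, mul_inv_cancel₀ (pow_ne_zero 2 hσ), one_smul]
  rw [Gmap, EMAMt_eq_trace_smul_one, trace_Amat hC, smul_one_mul, ← hshift, smul_smul, mul_comm]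

section Frobenius

variable {d : ℕ}

lemma frobInner_smul_right (A B : Matrix (Fin d) (Fin d) ℝ) (c : ℝ) :
    frobInner A (c • B) = c * frobInner A B := by
  simp only [frobInner, Matrix.smul_apply, smul_eq_mul, Finset.mul_sum]
  exact Finset.sum_congr rfl fun a _ => Finset.sum_congr rfl fun b _ => by ring

lemma frobInner_self_nonneg (A : Matrix (Fin d) (Fin d) ℝ) : 0 ≤ frobInner A A :=
  Finset.sum_nonneg fun _ _ => Finset.sum_nonneg fun _ _ => mul_self_nonneg _

lemma frobNorm_sq (A : Matrix (Fin d) (Fin d) ℝ) : frobNorm A ^ 2 = frobInner A A :=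
  Real.sq_sqrt (frobInner_self_nonneg A)

lemma frobNorm_smul (c : ℝ) (A : Matrix (Fin d) (Fin d) ℝ) :
    frobNorm (c • A) = |c| * frobNorm A := by
  have hsmul : frobInner (c • A) (c • A) = c ^ 2 * frobInner A A := by
    simp only [frobInner, Matrix.smul_apply, smul_eq_mul, Finset.mul_sum]
    exact Finset.sum_congr rfl fun a _ => Finset.sum_congr rfl fun b _ => by ring
  rw [frobNorm, hsmul, Real.sqrt_mul (sq_nonneg c), Real.sqrt_sq_eq_abs, frobNorm]

end Frobenius

theorem population_gradient_alignment_general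
    (d C : ℕ) (hC : 2 ≤ C) (σ : ℝ) (hσ : 0 < σ)
    (W : Matrix (Fin d) (Fin d) ℝ) :
    frobInner (W - (σ ^ 2)⁻¹ • (1 : Matrix (Fin d) (Fin d) ℝ)) (Gmap d C σ W) =
        σ ^ 2 * (1 - 1 / (C : ℝ)) *
          frobNorm (W - (σ ^ 2)⁻¹ • (1 : Matrix (Fin d) (Fin d) ℝ)) ^ 2 ∧
    frobNorm (Gmap d C σ W) =
        σ ^ 2 * (1 - 1 / (C : ℝ)) *
          frobNorm (W - (σ ^ 2)⁻¹ • (1 : Matrix (Fin d) (Fin d) ℝ)) := by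
  have hcoef : 0 ≤ σ ^ 2 * (1 - 1 / (C : ℝ)) := by
    have hCinv : (1 : ℝ) / C ≤ 1 :=
      div_le_one_of_le₀ (by exact_mod_cast (by omega : 1 ≤ C)) (by positivity)
    exact mul_nonneg (sq_nonneg σ) (sub_nonneg.2 hCinv)
  rw [Gmap_eq_smul (by omega) hσ.ne', frobInner_smul_right, frobNorm_smul, frobNorm_sq,
    abs_of_nonneg hcoef]
  exact ⟨rfl, rfl⟩

/-- alignment and norm identities for G. -/
theorem population_gradient_alignment
    (d C : ℕ) (hd : 1 ≤ d) (hC : 2 ≤ C) (σ : ℝ) (hσ : 0 < σ)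
    (W : Matrix (Fin d) (Fin d) ℝ) :
    frobInner (W - (σ ^ 2)⁻¹ • (1 : Matrix (Fin d) (Fin d) ℝ)) (Gmap d C σ W) =
        σ ^ 2 * (1 - 1 / (C : ℝ)) *
          frobNorm (W - (σ ^ 2)⁻¹ • (1 : Matrix (Fin d) (Fin d) ℝ)) ^ 2 ∧
    frobNorm (Gmap d C σ W) =
        σ ^ 2 * (1 - 1 / (C : ℝ)) *
          frobNorm (W - (σ ^ 2)⁻¹ • (1 : Matrix (Fin d) (Fin d) ℝ)) :=
  population_gradient_alignment_general d C hC σ hσ W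
end
end

section
/- Let L: ℝ^D → ℝ be twice continuously differentiable, let μ ∈ ℝ^D satisfy ∇L(μ) = 0, suppose the Hessian at μ satisfies ∇²L(μ) ⪯ −λ·I_D for some λ > 0, and suppose the Hessian is L₀-Lipschitz around μ in the sense that ‖∇²L(μ + ξ(v−μ)) − ∇²L(μ)‖_op ≤ L₀·ξ·‖v−μ‖ for all v ∈ ℝ^D and ξ ∈ [0,1]. Then for every v ∈ ℝ^D and every η > 0, ‖v − μ‖² + 2η·⟨v − μ, ∇L(v)⟩ ≤ (1 − 2ηλ)·‖v − μ‖² + 2ηL₀·‖v − μ‖³. -/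
/-!
Along the segment `ξ ↦ μ + ξ (v - μ)`, the function `φ ξ = ⟪v - μ, ∇L(μ + ξ (v - μ))⟫` vanishes
at `ξ = 0` and has derivative `⟪v - μ, ∇²L(…) (v - μ)⟫`, which the Hessian bound at `μ` and the
Lipschitz estimate keep below `-λ‖v - μ‖² + L₀ ξ ‖v - μ‖³`. Integrating over `[0, 1]` gives
`⟪v - μ, ∇L(v)⟫ ≤ -λ‖v - μ‖² + (L₀/2)‖v - μ‖³`, which is stronger than the claim.
-/

open Set
open scoped RealInnerProductSpace

noncomputable section

abbrev EuSp (D : ℕ) := EuclideanSpace ℝ (Fin D)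

theorem ContDiff.differentiable_gradient {F : Type*} [NormedAddCommGroup F]
    [InnerProductSpace ℝ F] [CompleteSpace F] {f : F → ℝ} (hf : ContDiff ℝ 2 f) :
    Differentiable ℝ (gradient f) :=
  (InnerProductSpace.toDual ℝ F).symm.differentiable.comp
    ((hf.fderiv_right (by norm_num)).differentiable one_ne_zero)

theorem image_one_le_of_deriv_le_affine {f f' : ℝ → ℝ} {a b : ℝ}
    (hf : ∀ ξ ∈ Icc (0 : ℝ) 1, HasDerivAt f (f' ξ) ξ)
    (bound : ∀ ξ ∈ Ico (0 : ℝ) 1, f' ξ ≤ a + b * ξ) :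
    f 1 ≤ f 0 + a + b / 2 := by
  have hB (ξ : ℝ) : HasDerivAt (fun ξ => f 0 + a * ξ + b / 2 * ξ ^ 2) (a + b * ξ) ξ := by
    have := (((hasDerivAt_id ξ).const_mul a).const_add (f 0)).add
      ((hasDerivAt_pow 2 ξ).const_mul (b / 2))
    exact this.congr_deriv (by ring)
  have := image_le_of_deriv_right_le_deriv_boundary (a := 0) (b := 1)
    (fun ξ hξ => (hf ξ hξ).continuousAt.continuousWithinAt)
    (fun ξ hξ => (hf ξ (Ico_subset_Icc_self hξ)).hasDerivWithinAt) (by simp)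
    (fun ξ _ => (hB ξ).continuousAt.continuousWithinAt) (fun ξ _ => (hB ξ).hasDerivWithinAt)
    bound (right_mem_Icc.2 zero_le_one)
  linarith

section InnerProductSpace

variable {E : Type*} [NormedAddCommGroup E] [InnerProductSpace ℝ E]

theorem real_inner_apply_le_add_norm_sub_mul_sq (A B : E →L[ℝ] E) (w : E) :
    ⟪w, A w⟫ ≤ ⟪w, B w⟫ + ‖A - B‖ * ‖w‖ ^ 2 := by
  have : ⟪w, (A - B) w⟫ ≤ ‖A - B‖ * ‖w‖ ^ 2 :=
    calc ⟪w, (A - B) w⟫ ≤ ‖w‖ * ‖(A - B) w‖ := real_inner_le_norm _ _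
      _ ≤ ‖w‖ * (‖A - B‖ * ‖w‖) := by gcongr; exact (A - B).le_opNorm w
      _ = ‖A - B‖ * ‖w‖ ^ 2 := by ring
  rw [sub_apply, inner_sub_right] at this
  linarith

theorem real_inner_sub_apply_le_of_fderiv_lipschitz {G : E → E} {μ v : E} {lam L₀ : ℝ}
    (hG : Differentiable ℝ G) (hμ : G μ = 0)
    (hneg : ⟪v - μ, fderiv ℝ G μ (v - μ)⟫ ≤ -lam * ‖v - μ‖ ^ 2)
    (hLip : ∀ ξ ∈ Icc (0 : ℝ) 1,
      ‖fderiv ℝ G (μ + ξ • (v - μ)) - fderiv ℝ G μ‖ ≤ L₀ * ξ * ‖v - μ‖) :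
    ⟪v - μ, G v⟫ ≤ -lam * ‖v - μ‖ ^ 2 + L₀ / 2 * ‖v - μ‖ ^ 3 := by
  set w := v - μ
  have hderiv (ξ : ℝ) : HasDerivAt (fun ξ : ℝ => ⟪w, G (μ + ξ • w)⟫)
      ⟪w, fderiv ℝ G (μ + ξ • w) w⟫ ξ := by
    have hline : HasDerivAt (fun ξ : ℝ => μ + ξ • w) w ξ := by
      simpa only [id_eq, one_smul] using ((hasDerivAt_id ξ).smul_const w).const_add μ
    simpa only [Function.comp_apply, inner_zero_left, add_zero] using
      (hasDerivAt_const ξ w).inner ℝ ((hG _).hasFDerivAt.comp_hasDerivAt ξ hline)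
  have hbound (ξ : ℝ) (hξ : ξ ∈ Icc (0 : ℝ) 1) :
      ⟪w, fderiv ℝ G (μ + ξ • w) w⟫ ≤ -lam * ‖w‖ ^ 2 + L₀ * ‖w‖ ^ 3 * ξ :=
    calc ⟪w, fderiv ℝ G (μ + ξ • w) w⟫
        ≤ ⟪w, fderiv ℝ G μ w⟫ + ‖fderiv ℝ G (μ + ξ • w) - fderiv ℝ G μ‖ * ‖w‖ ^ 2 :=
          real_inner_apply_le_add_norm_sub_mul_sq _ _ w
      _ ≤ -lam * ‖w‖ ^ 2 + L₀ * ξ * ‖w‖ * ‖w‖ ^ 2 := by gcongr; exact hLip ξ hξ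
      _ = -lam * ‖w‖ ^ 2 + L₀ * ‖w‖ ^ 3 * ξ := by ring
  have := image_one_le_of_deriv_le_affine (fun ξ _ => hderiv ξ)
    (fun ξ hξ => hbound ξ (Ico_subset_Icc_self hξ))
  simp only [zero_smul, add_zero, one_smul, hμ, inner_zero_right, w, add_sub_cancel] at this
  linarith

end InnerProductSpace

theorem descent_inequality_near_stationary_point_general
    (D : ℕ) (L : EuSp D → ℝ) (μ : EuSp D) (lam L₀ : ℝ)
    (hL₀ : 0 < L₀)
    (hC2 : ContDiff ℝ 2 L)
    (hgrad : gradient L μ = 0)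
    (hHess : ∀ w : EuSp D, ⟪w, fderiv ℝ (gradient L) μ w⟫ ≤ -lam * ‖w‖ ^ 2)
    (hLip : ∀ (v : EuSp D) (ξ : ℝ), ξ ∈ Icc (0 : ℝ) 1 →
      ‖fderiv ℝ (gradient L) (μ + ξ • (v - μ)) - fderiv ℝ (gradient L) μ‖ ≤
        L₀ * ξ * ‖v - μ‖)
    (v : EuSp D) (η : ℝ) (hη : 0 < η) :
    ‖v - μ‖ ^ 2 + 2 * η * ⟪v - μ, gradient L v⟫ ≤
      (1 - 2 * η * lam) * ‖v - μ‖ ^ 2 + 2 * η * L₀ * ‖v - μ‖ ^ 3 := by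
  have key := real_inner_sub_apply_le_of_fderiv_lipschitz hC2.differentiable_gradient hgrad
    (hHess (v - μ)) (hLip v)
  have hcubic : 0 ≤ η * L₀ * ‖v - μ‖ ^ 3 := by positivity
  linear_combination (2 * η) * key + hcubic

theorem descent_inequality_near_stationary_point
    (D : ℕ) (L : EuSp D → ℝ) (μ : EuSp D) (lam L₀ : ℝ)
    (hlam : 0 < lam) (hL₀ : 0 < L₀)
    (hC2 : ContDiff ℝ 2 L)
    (hgrad : gradient L μ = 0)
    (hHess : ∀ w : EuSp D, ⟪w, fderiv ℝ (gradient L) μ w⟫ ≤ -lam * ‖w‖ ^ 2)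
    (hLip : ∀ (v : EuSp D) (ξ : ℝ), ξ ∈ Icc (0 : ℝ) 1 →
      ‖fderiv ℝ (gradient L) (μ + ξ • (v - μ)) - fderiv ℝ (gradient L) μ‖ ≤
        L₀ * ξ * ‖v - μ‖)
    (v : EuSp D) (η : ℝ) (hη : 0 < η) :
    ‖v - μ‖ ^ 2 + 2 * η * ⟪v - μ, gradient L v⟫ ≤
      (1 - 2 * η * lam) * ‖v - μ‖ ^ 2 + 2 * η * L₀ * ‖v - μ‖ ^ 3 :=
  descent_inequality_near_stationary_point_general D L μ lam L₀ hL₀ hC2 hgrad hHess hLip v η hη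

end
end

section
/- Let α, λ, L, c₃, c₄, K, T′ > 0 and p ≥ 4 satisfy αλ ≥ 1, K ≥ 3c₃α², K ≥ 3c₄α, and T′ ≥ 36α²L²K, and let t ≥ 0 be such that 2αλ ≤ t + T′. Suppose the nonnegative reals a_t, a_{t+1} satisfy a_t ≤ K/(t+T′) and a_{t+1} ≤ (1 − 2αλ/(t+T′))·a_t + (2αL/(t+T′))·a_t^{3/2} + c₄·α·(t+T′)^{−(1+p/4)} + c₃·α²/(t+T′)². Then a_{t+1} ≤ K/(t+T′+1). -/
/-!
Statement 18: the one-step induction inequality used in the proof of Theorem 2: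
if a_t ≤ K/(t+T′) and a_{t+1} satisfies the error recursion, then
a_{t+1} ≤ K/(t+T′+1).
-/

private lemma em_key_aux (K s : ℝ) (hK : 0 < K) (hs : 0 < s) :
    (1 - 2 / s) * (K / s) + K / (3 * s ^ 2) + K / (3 * s ^ 2) + K / (3 * s ^ 2)
      ≤ K / (s + 1) := by
  have heq : (1 - 2 / s) * (K / s) + K / (3 * s ^ 2) + K / (3 * s ^ 2) + K / (3 * s ^ 2)
      = K / s - K / s ^ 2 := by field_simp; ring
  rw [heq, div_sub_div _ _ (ne_of_gt hs) (by positivity),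
    div_le_div_iff₀ (by positivity) (by positivity)]
  nlinarith [mul_nonneg hK.le hs.le]

theorem em_error_recursion_induction_step
    (α lam L c₃ c₄ K T' p t a_t a_t1 : ℝ)
    (hα : 0 < α) (hlam : 0 < lam) (hL : 0 < L) (hc₃ : 0 < c₃) (hc₄ : 0 < c₄)
    (hK : 0 < K) (hT' : 0 < T') (hp : 4 ≤ p)
    (hαlam : 1 ≤ α * lam)
    (hK₁ : 3 * c₃ * α ^ 2 ≤ K)
    (hK₂ : 3 * c₄ * α ≤ K)
    (hT : 36 * α ^ 2 * L ^ 2 * K ≤ T')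
    (ht : 0 ≤ t) (ht2 : 2 * α * lam ≤ t + T')
    (ha : 0 ≤ a_t) (ha1 : 0 ≤ a_t1)
    (hbound : a_t ≤ K / (t + T'))
    (hrec : a_t1 ≤ (1 - 2 * α * lam / (t + T')) * a_t +
        (2 * α * L / (t + T')) * a_t ^ ((3 : ℝ) / 2) +
        c₄ * α * (t + T') ^ (-(1 + p / 4)) +
        c₃ * α ^ 2 / (t + T') ^ 2) :
    a_t1 ≤ K / (t + T' + 1) := by
  set s := t + T' with hs_def
  have hs : 0 < s := by simp only [hs_def]; linarith
  have hs2 : (2:ℝ) ≤ s := by nlinarith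
  have h36 : 36 * α ^ 2 * L ^ 2 * K ≤ s := by simp only [hs_def]; linarith
  clear_value s
  have hKs : 0 ≤ K / s := by positivity
  -- coefficient bounds
  have hcoef : 0 ≤ 1 - 2 * α * lam / s := by
    have : 2 * α * lam / s ≤ 1 := by rw [div_le_one hs]; linarith
    linarith
  have hcoef2 : 1 - 2 * α * lam / s ≤ 1 - 2 / s := by
    have h2a : (2:ℝ) ≤ 2 * α * lam := by nlinarith
    have : 2 / s ≤ 2 * α * lam / s := by gcongr
    linarith
  have h1 : (1 - 2 * α * lam / s) * a_t ≤ (1 - 2 / s) * (K / s) := by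
    have hc2 : 0 ≤ 1 - 2 / s := by
      have : 2 / s ≤ 1 := by rw [div_le_one hs]; linarith
      linarith
    exact mul_le_mul hcoef2 hbound ha hc2
  -- cube term
  have hhalf : (K / s) ^ ((1:ℝ)/2) ≤ 1 / (6 * α * L) := by
    have hq : K / s ≤ (1 / (6 * α * L)) ^ 2 := by
      have heq : (1 / (6 * α * L)) ^ 2 = 1 / (36 * α ^ 2 * L ^ 2) := by
        rw [div_pow, one_pow]; ring_nf
      rw [heq, div_le_div_iff₀ hs (by positivity), one_mul]
      nlinarith
    calc (K / s) ^ ((1:ℝ)/2) ≤ ((1 / (6 * α * L)) ^ 2) ^ ((1:ℝ)/2) :=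
          Real.rpow_le_rpow (by positivity) hq (by norm_num)
      _ = 1 / (6 * α * L) := by
          rw [← Real.rpow_natCast (1 / (6 * α * L)) 2, ← Real.rpow_mul (by positivity)]
          norm_num
  have hsplit : (K / s) ^ ((3:ℝ)/2) = (K / s) * (K / s) ^ ((1:ℝ)/2) := by
    rw [show (3:ℝ)/2 = 1 + 1/2 by norm_num, Real.rpow_add (by positivity), Real.rpow_one]
  have hrt : a_t ^ ((3:ℝ)/2) ≤ (K / s) * (1 / (6 * α * L)) := by
    calc a_t ^ ((3:ℝ)/2) ≤ (K / s) ^ ((3:ℝ)/2) := Real.rpow_le_rpow ha hbound (by norm_num)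
      _ = (K / s) * (K / s) ^ ((1:ℝ)/2) := hsplit
      _ ≤ (K / s) * (1 / (6 * α * L)) := mul_le_mul_of_nonneg_left hhalf hKs
  have h2 : 2 * α * L / s * a_t ^ ((3:ℝ)/2) ≤ K / (3 * s ^ 2) := by
    calc 2 * α * L / s * a_t ^ ((3:ℝ)/2)
        ≤ 2 * α * L / s * ((K / s) * (1 / (6 * α * L))) := by
          apply mul_le_mul_of_nonneg_left hrt (by positivity)
      _ = K / (3 * s ^ 2) := by field_simp; ring
  -- p term
  have hexp : s ^ (-(1 + p / 4)) ≤ s ^ (-2 : ℝ) :=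
    Real.rpow_le_rpow_of_exponent_le (by linarith) (by linarith)
  have hs2eq : s ^ (-2 : ℝ) = 1 / s ^ 2 := by
    rw [show (-2:ℝ) = -((2:ℕ):ℝ) by norm_num, Real.rpow_neg hs.le, Real.rpow_natCast, one_div]
  have hmono : s ^ (-(1 + p / 4)) ≤ 1 / s ^ 2 := hs2eq ▸ hexp
  have h3 : c₄ * α * s ^ (-(1 + p / 4)) ≤ K / (3 * s ^ 2) := by
    have h5 : c₄ * α * s ^ (-(1 + p / 4)) ≤ c₄ * α * (1 / s ^ 2) :=
      mul_le_mul_of_nonneg_left hmono (by positivity)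
    have h6 : c₄ * α * (1 / s ^ 2) ≤ K / (3 * s ^ 2) := by
      rw [mul_one_div, div_le_div_iff₀ (by positivity) (by positivity)]
      have h := mul_le_mul_of_nonneg_right hK₂ (sq_nonneg s)
      linarith [h]
    linarith
  have h4 : c₃ * α ^ 2 / s ^ 2 ≤ K / (3 * s ^ 2) := by
    rw [div_le_div_iff₀ (by positivity) (by positivity)]
    have h := mul_le_mul_of_nonneg_right hK₁ (sq_nonneg s)
    linarith [h]
  -- combine
  have hkey : (1 - 2 / s) * (K / s) + K / (3 * s ^ 2) + K / (3 * s ^ 2) + K / (3 * s ^ 2)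
      ≤ K / (s + 1) := em_key_aux K s hK hs
  linarith [hrec, h1, h2, h3, h4, hkey]
end
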